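/- Let M be a nonnegative irreducible real n×n matrix with n ≥ 1 and let B be a complex n×n matrix such that |B_{ij}| ≤ M_{ij} for all indices i, j. If ρ(B) = ρ(M), then |B_{ij}| = M_{ij} for all indices i, j. -/

import Mathlib

/-!
Wielandt's argument. If `B x = μ x` with `‖μ‖ = ρ(B) = ρ(M)`, then `z = |x|` satisfies
`ρ z ≤ |B| z ≤ M z`. For irreducible `M` such a subinvariant `z ≥ 0` is an eigenvector:
otherwise the positive matrix `P = ∑_{k<N} M^k`, which commutes with `M`, turns the defect
`M z - ρ z` into a strictly positive one, so `w = P z` satisfies `(ρ + ε) w ≤ M w`, and then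
`‖M^m‖ ≥ (ρ + ε)^m` contradicts Gelfand's formula. Hence `M z = ρ z`, irreducibility makes
`z > 0`, and `|B| z = M z` together with `|B| ≤ M` forces `|B| = M`.
-/

open Matrix Polynomial

/-- The spectral radius of a complex square matrix: the maximum modulus of the roots
of its characteristic polynomial. -/
noncomputable def specRadC {n : ℕ} (B : Matrix (Fin n) (Fin n) ℂ) : ℝ :=
  sSup {r : ℝ | ∃ μ : ℂ, μ ∈ B.charpoly.roots ∧ ‖μ‖ = r}

/-- The spectral radius of a real square matrix: the spectral radius of the matrix
regarded as a complex matrix. -/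
noncomputable def specRad {n : ℕ} (A : Matrix (Fin n) (Fin n) ℝ) : ℝ :=
  specRadC (A.map (Complex.ofReal : ℝ → ℂ))

open Filter Topology Finset
open scoped NNReal ENNReal

theorem spectrum.coe_le_spectralRadius_of_forall_pow_le {A : Type*} [NormedRing A]
    [NormedAlgebra ℂ A] [CompleteSpace A] (a : A) {c : ℝ≥0} (h : ∀ m : ℕ, c ^ m ≤ ‖a ^ m‖₊) :
    (c : ℝ≥0∞) ≤ spectralRadius ℂ a := by
  refine ge_of_tendsto (spectrum.pow_nnnorm_pow_one_div_tendsto_nhds_spectralRadius a) ?_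
  filter_upwards [eventually_ne_atTop 0] with m hm
  calc (c : ℝ≥0∞) = ((c ^ m : ℝ≥0) : ℝ≥0∞) ^ (1 / m : ℝ) := by
        rw [ENNReal.coe_pow, ← ENNReal.rpow_natCast, ← ENNReal.rpow_mul,
          mul_one_div_cancel (by exact_mod_cast hm), ENNReal.rpow_one]
    _ ≤ (‖a ^ m‖₊ : ℝ≥0∞) ^ (1 / m : ℝ) :=
        ENNReal.rpow_le_rpow (by exact_mod_cast h m) (by positivity)

theorem exists_pos_smul_le {ι : Type*} [Finite ι] (u : ι → ℝ) {v : ι → ℝ} (hv : ∀ i, 0 < v i) :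
    ∃ ε : ℝ, 0 < ε ∧ ε • u ≤ v := by
  have hsmall : ∀ i, ∀ᶠ ε in 𝓝[>] (0 : ℝ), ε * u i < v i := fun i =>
    (((continuous_mul_const (u i)).tendsto' 0 0 (zero_mul _)).eventually
      (gt_mem_nhds (hv i))).filter_mono nhdsWithin_le_nhds
  obtain ⟨ε, hεu, hε⟩ := ((eventually_all.2 hsmall).and self_mem_nhdsWithin).exists
  exact ⟨ε, hε, fun i => (hεu i).le⟩

namespace Matrix

section Nonneg

variable {ι : Type*} [Fintype ι] {M P Q : Matrix ι ι ℝ} {u v : ι → ℝ}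

theorem mulVec_nonneg (hM : ∀ i j, 0 ≤ M i j) (hv : 0 ≤ v) : 0 ≤ M *ᵥ v :=
  fun i => Finset.sum_nonneg fun j _ => mul_nonneg (hM i j) (hv j)

theorem mulVec_mono (hM : ∀ i j, 0 ≤ M i j) (h : u ≤ v) : M *ᵥ u ≤ M *ᵥ v := by
  have := mulVec_nonneg hM (sub_nonneg.2 h)
  rwa [mulVec_sub, sub_nonneg] at this

theorem mulVec_le_mulVec_of_le (hPQ : ∀ i j, P i j ≤ Q i j) (hv : 0 ≤ v) : P *ᵥ v ≤ Q *ᵥ v :=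
  fun i => Finset.sum_le_sum fun j _ => mul_le_mul_of_nonneg_right (hPQ i j) (hv j)

theorem mulVec_pos_of_pos (hP : ∀ i j, 0 < P i j) (hv : 0 ≤ v) (hv0 : v ≠ 0) (i : ι) :
    0 < (P *ᵥ v) i := by
  obtain ⟨j, hj⟩ : ∃ j, 0 < v j := by
    by_contra! h
    exact hv0 (le_antisymm h hv)
  exact Finset.sum_pos' (fun k _ => mul_nonneg (hP i k).le (hv k))
    ⟨j, Finset.mem_univ j, mul_pos (hP i j) hj⟩

theorem eq_of_forall_le_of_mulVec_eq (hPQ : ∀ i j, P i j ≤ Q i j) (hv : ∀ j, 0 < v j)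
    (h : P *ᵥ v = Q *ᵥ v) : P = Q := by
  ext i j
  have hsum : ∑ k, (Q i k - P i k) * v k = 0 := by
    simp only [sub_mul, Finset.sum_sub_distrib]
    exact sub_eq_zero.2 (congrFun h i).symm
  have hterm := (Finset.sum_eq_zero_iff_of_nonneg fun k _ =>
    mul_nonneg (sub_nonneg.2 (hPQ i k)) (hv k).le).1 hsum j (Finset.mem_univ j)
  exact (sub_eq_zero.1 ((mul_eq_zero.1 hterm).resolve_right (hv j).ne')).symm

variable [DecidableEq ι]

theorem pow_smul_le_pow_mulVec (hM : ∀ i j, 0 ≤ M i j) {c : ℝ} (hc : 0 ≤ c)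
    (h : c • v ≤ M *ᵥ v) (m : ℕ) : c ^ m • v ≤ (M ^ m) *ᵥ v := by
  induction m with
  | zero => simp
  | succ m ih =>
    calc c ^ (m + 1) • v = c • (c ^ m • v) := by rw [pow_succ', mul_smul]
      _ ≤ c • ((M ^ m) *ᵥ v) := smul_le_smul_of_nonneg_left ih hc
      _ = (M ^ m) *ᵥ (c • v) := (mulVec_smul _ _ _).symm
      _ ≤ (M ^ m) *ᵥ (M *ᵥ v) := mulVec_mono (pow_apply_nonneg hM m) h
      _ = (M ^ (m + 1)) *ᵥ v := by rw [mulVec_mulVec, pow_succ]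

theorem pow_mulVec_eq_smul {r : ℝ} (h : M *ᵥ v = r • v) (k : ℕ) : (M ^ k) *ᵥ v = r ^ k • v := by
  induction k with
  | zero => simp
  | succ k ih => rw [pow_succ', ← mulVec_mulVec, ih, mulVec_smul, h, smul_smul, pow_succ]

theorem IsIrreducible.exists_sum_pow_pos (hM : M.IsIrreducible) :
    ∃ N, ∀ i j, 0 < (∑ k ∈ range N, M ^ k) i j := by
  choose k _ hk using (isIrreducible_iff_exists_pow_pos hM.nonneg).1 hM
  let K : ι × ι → ℕ := fun p => k p.1 p.2
  refine ⟨univ.sup K + 1, fun i j => ?_⟩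
  rw [sum_apply]
  exact Finset.sum_pos' (fun l _ => pow_apply_nonneg hM.nonneg l i j)
    ⟨k i j, mem_range.2 (Nat.lt_succ_of_le (le_sup (f := K) (mem_univ (i, j)))), hk i j⟩

theorem IsIrreducible.pos_of_mulVec_eq_smul (hM : M.IsIrreducible) {r : ℝ} (hv : 0 ≤ v)
    (hv0 : v ≠ 0) (h : M *ᵥ v = r • v) (i : ι) : 0 < v i := by
  obtain ⟨N, hN⟩ := hM.exists_sum_pow_pos
  have hpos := mulVec_pos_of_pos hN hv hv0 i
  rw [sum_mulVec, Finset.sum_congr rfl fun k _ => pow_mulVec_eq_smul h k, ← Finset.sum_smul,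
    Pi.smul_apply, smul_eq_mul] at hpos
  exact (hv i).lt_of_ne' fun h0 => by simp [h0] at hpos

end Nonneg

theorem norm_smul_le_map_norm_mulVec {ι 𝕜 : Type*} [Fintype ι] [NormedField 𝕜]
    {B : Matrix ι ι 𝕜} {μ : 𝕜} {x : ι → 𝕜} (h : B *ᵥ x = μ • x) :
    ‖μ‖ • (fun i => ‖x i‖) ≤ B.map (‖·‖) *ᵥ fun i => ‖x i‖ := fun i =>
  calc ‖μ‖ * ‖x i‖ = ‖(B *ᵥ x) i‖ := by rw [h, Pi.smul_apply, smul_eq_mul, norm_mul]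
    _ ≤ ∑ j, ‖B i j * x j‖ := norm_sum_le _ _
    _ = _ := by simp only [mulVec, dotProduct, map_apply, norm_mul]

theorem exists_mulVec_eq_smul_of_mem_spectrum {ι K : Type*} [Fintype ι] [DecidableEq ι] [Field K]
    {A : Matrix ι ι K} {μ : K} (hμ : μ ∈ spectrum K A) : ∃ x ≠ 0, A *ᵥ x = μ • x := by
  rw [← spectrum_toLin', ← Module.End.hasEigenvalue_iff_mem_spectrum] at hμ
  obtain ⟨x, hx⟩ := hμ.exists_hasEigenvector
  exact ⟨x, hx.2, by simpa using hx.apply_eq_smul⟩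

end Matrix

section SpectralRadius

variable {n : ℕ}

theorem specRadC_eq_sSup_norm_spectrum (B : Matrix (Fin n) (Fin n) ℂ) :
    specRadC B = sSup ((‖·‖) '' spectrum ℂ B) := by
  simp only [specRadC, mem_roots B.charpoly_monic.ne_zero, ← mem_spectrum_iff_isRoot_charpoly]
  rfl

theorem specRadC_nonneg (B : Matrix (Fin n) (Fin n) ℂ) : 0 ≤ specRadC B := by
  rw [specRadC_eq_sSup_norm_spectrum]
  exact Real.sSup_nonneg (by rintro _ ⟨μ, -, rfl⟩; exact norm_nonneg μ)

theorem norm_le_specRadC {B : Matrix (Fin n) (Fin n) ℂ} {μ : ℂ} (hμ : μ ∈ spectrum ℂ B) :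
    ‖μ‖ ≤ specRadC B := by
  rw [specRadC_eq_sSup_norm_spectrum]
  exact le_csSup (B.finite_spectrum.image _).bddAbove ⟨μ, hμ, rfl⟩

theorem exists_mem_spectrum_norm_eq_specRadC [Nonempty (Fin n)] (B : Matrix (Fin n) (Fin n) ℂ) :
    ∃ μ ∈ spectrum ℂ B, ‖μ‖ = specRadC B := by
  obtain ⟨μ, hμ⟩ := IsAlgClosed.exists_root B.charpoly
    (by rw [charpoly_degree_eq_dim]; exact_mod_cast Fintype.card_ne_zero)
  have hne : (spectrum ℂ B).Nonempty := ⟨μ, mem_spectrum_iff_isRoot_charpoly.2 hμ⟩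
  rw [specRadC_eq_sSup_norm_spectrum]
  exact (hne.image _).csSup_mem (B.finite_spectrum.image _)

theorem spectralRadius_le_ofReal_specRadC (B : Matrix (Fin n) (Fin n) ℂ) :
    spectralRadius ℂ B ≤ ENNReal.ofReal (specRadC B) :=
  iSup₂_le fun μ hμ => by
    rw [← enorm_eq_nnnorm, ← ofReal_norm]
    exact ENNReal.ofReal_le_ofReal (norm_le_specRadC hμ)

attribute [local instance] Matrix.linftyOpNormedAddCommGroup Matrix.linftyOpNormedRing
  Matrix.linftyOpNormedAlgebra

theorem le_specRad_of_smul_le_mulVec {M : Matrix (Fin n) (Fin n) ℝ} (hM : ∀ i j, 0 ≤ M i j)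
    {c : ℝ} (hc : 0 ≤ c) {w : Fin n → ℝ} (hw : 0 ≤ w) (hw0 : w ≠ 0) (h : c • w ≤ M *ᵥ w) :
    c ≤ specRad M := by
  have : CompleteSpace (Matrix (Fin n) (Fin n) ℂ) := FiniteDimensional.complete ℂ _
  have hwpos : 0 < ‖w‖ := norm_pos_iff.2 hw0
  have hnorm : ∀ m : ℕ, c ^ m ≤ ‖(M.map (Complex.ofReal : ℝ → ℂ)) ^ m‖ := fun m => by
    have hmono : c ^ m * ‖w‖ ≤ ‖(M ^ m) *ᵥ w‖ := by
      rw [← abs_of_nonneg (pow_nonneg hc m), ← Real.norm_eq_abs, ← norm_smul]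
      refine (pi_norm_le_iff_of_nonneg (norm_nonneg _)).2 fun i => ?_
      have hle := pow_smul_le_pow_mulVec hM hc h m i
      have hnn : 0 ≤ (c ^ m • w) i := smul_nonneg (pow_nonneg hc m) (hw i)
      rw [Real.norm_of_nonneg hnn]
      exact hle.trans ((le_abs_self _).trans (norm_le_pi_norm ((M ^ m) *ᵥ w) i))
    have hmap : ‖(M.map (Complex.ofReal : ℝ → ℂ)) ^ m‖ = ‖M ^ m‖ := by
      have hpow : (M.map Complex.ofReal) ^ m = (M ^ m).map Complex.ofReal :=
        (map_pow Complex.ofRealHom.mapMatrix M m).symm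
      simp [hpow, linfty_opNorm_def]
    rw [hmap]
    exact le_of_mul_le_mul_right (hmono.trans (linfty_opNorm_mulVec _ _)) hwpos
  have hρ := (spectrum.coe_le_spectralRadius_of_forall_pow_le _ (c := c.toNNReal) fun m => by
    rw [← NNReal.coe_le_coe, NNReal.coe_pow, Real.coe_toNNReal _ hc, coe_nnnorm]
    exact hnorm m).trans (spectralRadius_le_ofReal_specRadC _)
  exact (ENNReal.ofReal_le_ofReal_iff (specRadC_nonneg _)).1 hρ

end SpectralRadius

theorem Matrix.IsIrreducible.mulVec_eq_specRad_smul {n : ℕ} {M : Matrix (Fin n) (Fin n) ℝ}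
    (hM : M.IsIrreducible) {z : Fin n → ℝ} (hz : 0 ≤ z) (hz0 : z ≠ 0)
    (h : specRad M • z ≤ M *ᵥ z) : M *ᵥ z = specRad M • z := by
  by_contra hne
  obtain ⟨N, hN⟩ := hM.exists_sum_pow_pos
  set P := ∑ k ∈ range N, M ^ k
  have hPM : P * M = M * P := Commute.sum_left _ _ _ fun k _ => (Commute.refl M).pow_left k
  set w := P *ᵥ z
  have hgap : ∀ i, 0 < (M *ᵥ w - specRad M • w) i := by
    have hw : M *ᵥ w - specRad M • w = P *ᵥ (M *ᵥ z - specRad M • z) := by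
      simp only [w, mulVec_sub, mulVec_smul, mulVec_mulVec, hPM]
    rw [hw]
    exact mulVec_pos_of_pos hN (sub_nonneg.2 h) (sub_ne_zero.2 hne)
  have hw0 : w ≠ 0 := by
    obtain ⟨i, -⟩ := Function.ne_iff.1 hz0
    intro h0
    simpa [h0] using hgap i
  obtain ⟨ε, hε, hεw⟩ := exists_pos_smul_le w hgap
  have hle := le_specRad_of_smul_le_mulVec hM.nonneg (c := specRad M + ε)
    (add_nonneg (specRadC_nonneg _) hε.le)
    (mulVec_nonneg (fun i j => (hN i j).le) hz) hw0
    (by rw [add_smul]; exact le_sub_iff_add_le'.1 hεw)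
  linarith

theorem abs_eq_of_specRad_eq_general {n : ℕ}
    (M : Matrix (Fin n) (Fin n) ℝ)
    (hM : ∀ i j, 0 ≤ M i j)
    (hirr : ∀ i j, ∃ k : ℕ, 1 ≤ k ∧ 0 < (M ^ k) i j)
    (B : Matrix (Fin n) (Fin n) ℂ)
    (hB : ∀ i j, ‖B i j‖ ≤ M i j)
    (heq : specRadC B = specRad M) :
    ∀ i j, ‖B i j‖ = M i j := by
  intro i j
  have : Nonempty (Fin n) := ⟨i⟩
  have hMirr : M.IsIrreducible := (isIrreducible_iff_exists_pow_pos hM).2 hirr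
  obtain ⟨μ, hμ, hμρ⟩ := exists_mem_spectrum_norm_eq_specRadC B
  obtain ⟨x, hx0, hBx⟩ := exists_mulVec_eq_smul_of_mem_spectrum hμ
  set z : Fin n → ℝ := fun k => ‖x k‖
  have hz : 0 ≤ z := fun _ => norm_nonneg _
  have hz0 : z ≠ 0 := fun h => hx0 (funext fun k => norm_eq_zero.1 (congrFun h k))
  have hBz : B.map (‖·‖) *ᵥ z ≤ M *ᵥ z := mulVec_le_mulVec_of_le hB hz
  have hρz : specRad M • z ≤ B.map (‖·‖) *ᵥ z := by
    rw [← heq, ← hμρ]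
    exact norm_smul_le_map_norm_mulVec hBx
  have hMz := hMirr.mulVec_eq_specRad_smul hz hz0 (hρz.trans hBz)
  have hB_eq : B.map (‖·‖) = M :=
    eq_of_forall_le_of_mulVec_eq hB (hMirr.pos_of_mulVec_eq_smul hz hz0 hMz)
      (le_antisymm hBz (hMz ▸ hρz))
  exact congrFun (congrFun hB_eq i) j

theorem abs_eq_of_specRad_eq {n : ℕ} (hn : 1 ≤ n)
    (M : Matrix (Fin n) (Fin n) ℝ)
    (hM : ∀ i j, 0 ≤ M i j)
    (hirr : ∀ i j, ∃ k : ℕ, 1 ≤ k ∧ 0 < (M ^ k) i j)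
    (B : Matrix (Fin n) (Fin n) ℂ)
    (hB : ∀ i j, ‖B i j‖ ≤ M i j)
    (heq : specRadC B = specRad M) :
    ∀ i j, ‖B i j‖ = M i j :=
  abs_eq_of_specRad_eq_general M hM hirr B hB heq
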